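/- Let E₁ : ℬ(Ω₁) → L(H) and E₂ : ℬ(Ω₂) → L(H) be observables on Borel spaces. If there exists a regular observable E : ℬ(Ω) → L(H) with ran(E₁) ∪ ran(E₂) ⊆ ran(E), then E₁ and E₂ are functionally coexistent; indeed the map (X,Y) ↦ E₁(X) ∧_{ran(E)} E₂(Y) (the meet taken in the Boolean algebra ran(E)) is a biobservable for E₁ and E₂. -/

import Mathlib

set_option linter.unusedSectionVars false
set_option maxHeartbeats 1000000


open MeasureTheory

noncomputable section

/-- The numerical "expectation" `⟪φ, T φ⟫` of an operator `T` at a vector `φ`. -/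
def ev {H : Type*} [NormedAddCommGroup H] [InnerProductSpace ℂ H]
    (T : H →L[ℂ] H) (φ : H) : ℂ :=
  @inner ℂ H _ φ (T φ)

/-- An observable: a positive, normalized, weakly σ-additive operator measure, defined on
the measurable sets of `(Ω, 𝒜)` with values in the bounded operators on `H`. -/
structure Observable (Ω : Type*) [MeasurableSpace Ω] (H : Type*) [NormedAddCommGroup H]
    [InnerProductSpace ℂ H] [CompleteSpace H] where
  toFun : Set Ω → (H →L[ℂ] H)
  pos : ∀ X : Set Ω, MeasurableSet X → (toFun X).IsPositive
  normalized : toFun Set.univ = 1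
  sigmaAdditive : ∀ f : ℕ → Set Ω, (∀ i, MeasurableSet (f i)) →
    Pairwise (Function.onFun Disjoint f) → ∀ φ : H,
      HasSum (fun i => ev (toFun (f i)) φ) (ev (toFun (⋃ i, f i)) φ)

/-- The Löwner order on bounded operators: `opLE A B` iff `B - A` is positive. -/
def opLE {H : Type*} [NormedAddCommGroup H] [InnerProductSpace ℂ H] [CompleteSpace H]
    (A B : H →L[ℂ] H) : Prop :=
  (B - A).IsPositive

namespace Observable

variable {H : Type*} [NormedAddCommGroup H] [InnerProductSpace ℂ H] [CompleteSpace H]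

/-- The range `ran(E) = {E(X) | X ∈ 𝒜}` of an observable. -/
def ran {Ω : Type*} [MeasurableSpace Ω] (E : Observable Ω H) : Set (H →L[ℂ] H) :=
  {A | ∃ X : Set Ω, MeasurableSet X ∧ A = E.toFun X}

/-- A projection valued observable: every value is an orthogonal projection. -/
def ProjectionValued {Ω : Type*} [MeasurableSpace Ω] (E : Observable Ω H) : Prop :=
  ∀ X : Set Ω, MeasurableSet X → IsSelfAdjoint (E.toFun X) ∧ IsIdempotentElem (E.toFun X)

/-- A regular observable: for every `X` with `O ≠ E(X) ≠ I`, neither `E(X) ≤ (1/2)I`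
nor `(1/2)I ≤ E(X)`. -/
def Regular {Ω : Type*} [MeasurableSpace Ω] (E : Observable Ω H) : Prop :=
  ∀ X : Set Ω, MeasurableSet X → E.toFun X ≠ 0 → E.toFun X ≠ 1 →
    ¬ opLE (E.toFun X) ((1/2 : ℂ) • 1) ∧ ¬ opLE ((1/2 : ℂ) • 1) (E.toFun X)

end Observable

variable {H : Type*} [NormedAddCommGroup H] [InnerProductSpace ℂ H] [CompleteSpace H]

/-- Coexistence: the union of the ranges of `E₁` and `E₂` is contained in the range
of a third observable. -/
def Coexistent {Ω₁ Ω₂ : Type*} [MeasurableSpace Ω₁] [MeasurableSpace Ω₂]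
    (E₁ : Observable Ω₁ H) (E₂ : Observable Ω₂ H) : Prop :=
  ∃ (Ω : Type) (_m : MeasurableSpace Ω) (E : Observable Ω H),
    E₁.ran ∪ E₂.ran ⊆ E.ran

/-- Commensurability: coexistence witnessed by a projection valued observable. -/
def CommensurableObs {Ω₁ Ω₂ : Type*} [MeasurableSpace Ω₁] [MeasurableSpace Ω₂]
    (E₁ : Observable Ω₁ H) (E₂ : Observable Ω₂ H) : Prop :=
  ∃ (Ω : Type) (_m : MeasurableSpace Ω) (E : Observable Ω H),
    E.ProjectionValued ∧ E₁.ran ∪ E₂.ran ⊆ E.ran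

/-- Functional coexistence: `E₁` and `E₂` are obtained from a single observable `E` as
preimages under measurable functions. -/
def FunctionallyCoexistent {Ω₁ Ω₂ : Type*} [MeasurableSpace Ω₁] [MeasurableSpace Ω₂]
    (E₁ : Observable Ω₁ H) (E₂ : Observable Ω₂ H) : Prop :=
  ∃ (Ω : Type) (_m : MeasurableSpace Ω) (E : Observable Ω H)
    (f₁ : Ω → Ω₁) (f₂ : Ω → Ω₂),
      Measurable f₁ ∧ Measurable f₂ ∧
      (∀ X : Set Ω₁, MeasurableSet X → E₁.toFun X = E.toFun (f₁ ⁻¹' X)) ∧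
      (∀ Y : Set Ω₂, MeasurableSet Y → E₂.toFun Y = E.toFun (f₂ ⁻¹' Y))

/-- A positive operator bimeasure: positive values, and each partial map is weakly
σ-additive. -/
def IsPOBimeasure {Ω₁ Ω₂ : Type*} [MeasurableSpace Ω₁] [MeasurableSpace Ω₂]
    (B : Set Ω₁ → Set Ω₂ → (H →L[ℂ] H)) : Prop :=
  (∀ (X : Set Ω₁) (Y : Set Ω₂), MeasurableSet X → MeasurableSet Y → (B X Y).IsPositive) ∧
  (∀ Y : Set Ω₂, MeasurableSet Y → ∀ f : ℕ → Set Ω₁, (∀ i, MeasurableSet (f i)) →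
    Pairwise (Function.onFun Disjoint f) → ∀ φ : H,
      HasSum (fun i => ev (B (f i) Y) φ) (ev (B (⋃ i, f i) Y) φ)) ∧
  (∀ X : Set Ω₁, MeasurableSet X → ∀ g : ℕ → Set Ω₂, (∀ i, MeasurableSet (g i)) →
    Pairwise (Function.onFun Disjoint g) → ∀ φ : H,
      HasSum (fun i => ev (B X (g i)) φ) (ev (B X (⋃ i, g i)) φ))

/-- `B` is a biobservable for `E₁` and `E₂`. -/
def IsBiobservable {Ω₁ Ω₂ : Type*} [MeasurableSpace Ω₁] [MeasurableSpace Ω₂]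
    (B : Set Ω₁ → Set Ω₂ → (H →L[ℂ] H))
    (E₁ : Observable Ω₁ H) (E₂ : Observable Ω₂ H) : Prop :=
  IsPOBimeasure B ∧ B Set.univ Set.univ = 1 ∧
  (∀ X : Set Ω₁, MeasurableSet X → B X Set.univ = E₁.toFun X) ∧
  (∀ Y : Set Ω₂, MeasurableSet Y → B Set.univ Y = E₂.toFun Y)

/-- `E₁` and `E₂` have a biobservable. -/
def HasBiobservable {Ω₁ Ω₂ : Type*} [MeasurableSpace Ω₁] [MeasurableSpace Ω₂]
    (E₁ : Observable Ω₁ H) (E₂ : Observable Ω₂ H) : Prop :=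
  ∃ B : Set Ω₁ → Set Ω₂ → (H →L[ℂ] H), IsBiobservable B E₁ E₂

/-- `F` is a joint observable of `E₁` and `E₂`: its marginals are `E₁` and `E₂`. -/
def IsJointObservable {Ω₁ Ω₂ : Type*} [MeasurableSpace Ω₁] [MeasurableSpace Ω₂]
    (F : Observable (Ω₁ × Ω₂) H)
    (E₁ : Observable Ω₁ H) (E₂ : Observable Ω₂ H) : Prop :=
  (∀ X : Set Ω₁, MeasurableSet X → F.toFun (X ×ˢ (Set.univ : Set Ω₂)) = E₁.toFun X) ∧
  (∀ Y : Set Ω₂, MeasurableSet Y → F.toFun ((Set.univ : Set Ω₁) ×ˢ Y) = E₂.toFun Y)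

/-- `E₁` and `E₂` have a joint observable. -/
def HasJointObservable {Ω₁ Ω₂ : Type*} [MeasurableSpace Ω₁] [MeasurableSpace Ω₂]
    (E₁ : Observable Ω₁ H) (E₂ : Observable Ω₂ H) : Prop :=
  ∃ F : Observable (Ω₁ × Ω₂) H, IsJointObservable F E₁ E₂

/-- The commutativity domain of two observables. -/
def comSet {Ω₁ Ω₂ : Type*} [MeasurableSpace Ω₁] [MeasurableSpace Ω₂]
    (E₁ : Observable Ω₁ H) (E₂ : Observable Ω₂ H) : Set H :=
  {φ | ∀ (X : Set Ω₁) (Y : Set Ω₂), MeasurableSet X → MeasurableSet Y →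
    (E₁.toFun X) ((E₂.toFun Y) φ) = (E₂.toFun Y) ((E₁.toFun X) φ)}

/-- `ran(E)` is a Boolean algebra with respect to the order inherited from the effects,
with complement `A ↦ I - A`. -/
def RanIsBoolean {Ω : Type*} [MeasurableSpace Ω] (E : Observable Ω H) : Prop :=
  ∃ inst : BooleanAlgebra E.ran,
    (∀ a b : E.ran, (letI := inst; a ≤ b) ↔ opLE (a : H →L[ℂ] H) (b : H →L[ℂ] H)) ∧
    (∀ a : E.ran, letI := inst; ((aᶜ : E.ran) : H →L[ℂ] H) = 1 - (a : H →L[ℂ] H))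


open Topology in
theorem myPolishSpace (α : Type*) [TopologicalSpace α] [LocallyCompactSpace α]
    [TopologicalSpace.MetrizableSpace α] [TopologicalSpace.SeparableSpace α] :
    PolishSpace α := by
  letI : MetricSpace α := TopologicalSpace.metrizableSpaceMetric α
  haveI : SecondCountableTopology (UniformSpace.Completion α) := by
    haveI : TopologicalSpace.SeparableSpace (UniformSpace.Completion α) :=
      UniformSpace.Completion.denseRange_coe.separableSpace
        (UniformSpace.Completion.continuous_coe α)
    exact UniformSpace.secondCountable_of_separable _
  haveI : PolishSpace (UniformSpace.Completion α) := inferInstance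
  have emb : IsEmbedding ((↑) : α → UniformSpace.Completion α) :=
    (UniformSpace.Completion.coe_isometry).isEmbedding
  have ho : IsOpen (Set.range ((↑) : α → UniformSpace.Completion α)) := by
    rw [isOpen_iff_forall_mem_open]
    rintro x ⟨a, rfl⟩
    obtain ⟨K, hKc, hKn⟩ := exists_compact_mem_nhds a
    obtain ⟨U, hUK, hUo, haU⟩ := mem_nhds_iff.1 hKn
    obtain ⟨V, hVo, hVU⟩ := emb.isInducing.isOpen_iff.1 hUo
    refine ⟨V, ?_, hVo, by rw [← hVU] at haU; exact haU⟩
    have h1 : V ⊆ closure (V ∩ Set.range ((↑) : α → UniformSpace.Completion α)) :=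
      UniformSpace.Completion.denseRange_coe.open_subset_closure_inter hVo
    have h2 : V ∩ Set.range ((↑) : α → UniformSpace.Completion α)
        ⊆ (↑) '' K := by
      rw [← Set.image_preimage_eq_inter_range, hVU]
      exact Set.image_mono hUK
    have h3 : closure (V ∩ Set.range ((↑) : α → UniformSpace.Completion α))
        ⊆ (↑) '' K :=
      ((hKc.image (UniformSpace.Completion.continuous_coe α)).isClosed).closure_subset_iff.2 h2
    exact h1.trans (h3.trans (Set.image_subset_range _ _))
  haveI : PolishSpace (Set.range ((↑) : α → UniformSpace.Completion α)) := ho.polishSpace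
  exact emb.toHomeomorph.isClosedEmbedding.polishSpace


section Aux
variable {H : Type*} [NormedAddCommGroup H] [InnerProductSpace ℂ H] [CompleteSpace H]

lemma ev_add (A B : H →L[ℂ] H) (φ : H) : ev (A + B) φ = ev A φ + ev B φ := by
  simp [ev, inner_add_right]

lemma ev_zero (φ : H) : ev (0 : H →L[ℂ] H) φ = 0 := by simp [ev]

lemma op_eq_of_ev {A B : H →L[ℂ] H} (h : ∀ φ, ev A φ = ev B φ) : A = B := by
  have h0 : ∀ x : H, @inner ℂ H _ (((A - B : H →L[ℂ] H) : H →ₗ[ℂ] H) x) x = 0 := by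
    intro x
    have hx : @inner ℂ H _ x ((A - B) x) = 0 := by
      simp only [ContinuousLinearMap.sub_apply, inner_sub_right]
      have := h x
      simp only [ev] at this
      rw [this, sub_self]
    calc @inner ℂ H _ ((A - B) x) x = starRingEnd ℂ (@inner ℂ H _ x ((A - B) x)) :=
          (inner_conj_symm _ _).symm
      _ = 0 := by rw [hx]; simp
  have hlin := (inner_map_self_eq_zero ((A - B : H →L[ℂ] H) : H →ₗ[ℂ] H)).1 h0
  have hAB : A - B = 0 := by
    ext x
    exact congrFun (congrArg (fun (f : H →ₗ[ℂ] H) => (f : H → H)) hlin) x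
  exact sub_eq_zero.1 hAB

lemma ev_conj {T : H →L[ℂ] H} (hT : IsSelfAdjoint T) (φ : H) :
    starRingEnd ℂ (ev T φ) = ev T φ := by
  unfold ev
  rw [inner_conj_symm]
  conv_lhs => rw [← hT.adjoint_eq]
  rw [ContinuousLinearMap.adjoint_inner_left]

lemma ev_re_ofReal {T : H →L[ℂ] H} (hT : IsSelfAdjoint T) (φ : H) :
    ((ev T φ).re : ℂ) = ev T φ :=
  Complex.conj_eq_iff_re.1 (ev_conj hT φ)

namespace Observable
variable {Ω : Type*} [MeasurableSpace Ω] (E : Observable Ω H)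

lemma selfAdjoint {X : Set Ω} (hX : MeasurableSet X) : IsSelfAdjoint (E.toFun X) :=
  (E.pos X hX).isSelfAdjoint

lemma ev_re_nonneg {X : Set Ω} (hX : MeasurableSet X) (φ : H) :
    0 ≤ (ev (E.toFun X) φ).re := by
  have := (E.pos X hX).inner_nonneg_right φ
  simpa [ev] using (Complex.le_def.1 this).1

lemma toFun_empty : E.toFun ∅ = 0 := by
  apply op_eq_of_ev
  intro φ
  rw [ev_zero]
  have h := E.sigmaAdditive (fun _ => ∅) (fun _ => MeasurableSet.empty)
    (fun i j _ => by simp [Function.onFun]) φ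
  rw [Set.iUnion_empty] at h
  exact (summable_const_iff _).1 h.summable

lemma add_of_disjoint {X Y : Set Ω} (hX : MeasurableSet X) (hY : MeasurableSet Y)
    (hd : Disjoint X Y) : E.toFun (X ∪ Y) = E.toFun X + E.toFun Y := by
  apply op_eq_of_ev
  intro φ
  rw [ev_add]
  set f : ℕ → Set Ω := fun n => if n = 0 then X else if n = 1 then Y else ∅ with hf
  have hm : ∀ i, MeasurableSet (f i) := by
    intro i
    simp only [hf]
    split_ifs <;> [exact hX; exact hY; exact MeasurableSet.empty]
  have hpd : Pairwise (Function.onFun Disjoint f) := by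
    intro i j hij
    simp only [Function.onFun, hf]
    split_ifs <;> simp_all [hd, hd.symm]
  have hU : ⋃ i, f i = X ∪ Y := by
    ext ω
    simp only [Set.mem_iUnion, Set.mem_union]
    constructor
    · rintro ⟨i, hi⟩
      revert hi
      simp only [hf]
      split_ifs <;> intro hi <;> simp_all
    · rintro (h | h)
      · exact ⟨0, by simp [hf, h]⟩
      · exact ⟨1, by simp [hf, h]⟩
  have hsum : HasSum (fun i => ev (E.toFun (f i)) φ) (ev (E.toFun X) φ + ev (E.toFun Y) φ) := by
    have he : (fun i => ev (E.toFun (f i)) φ) =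
        (fun i => if i = 0 then ev (E.toFun X) φ else 0) +
        (fun i => if i = 1 then ev (E.toFun Y) φ else 0) := by
      funext i
      simp only [hf, Pi.add_apply]
      rcases eq_or_ne i 0 with h0 | h0
      · simp [h0]
      rcases eq_or_ne i 1 with h1 | h1
      · simp [h0, h1]
      · simp [h0, h1, E.toFun_empty, ev_zero]
    rw [he]
    exact (hasSum_ite_eq 0 _).add (hasSum_ite_eq 1 _)
  have h2 := E.sigmaAdditive f hm hpd φ
  rw [hU] at h2
  exact h2.unique hsum

lemma union_diff {X Y : Set Ω} (hX : MeasurableSet X) (hY : MeasurableSet Y)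
    (hXY : X ⊆ Y) : E.toFun Y = E.toFun X + E.toFun (Y \ X) := by
  rw [← E.add_of_disjoint hX (hY.diff hX) disjoint_sdiff_self_right, Set.union_diff_cancel hXY]

lemma opLE_of_subset {X Y : Set Ω} (hX : MeasurableSet X) (hY : MeasurableSet Y)
    (hXY : X ⊆ Y) : opLE (E.toFun X) (E.toFun Y) := by
  unfold opLE
  rw [E.union_diff hX hY hXY, add_sub_cancel_left]
  exact E.pos _ (hY.diff hX)

def obsMeasure (φ : H) : Measure Ω :=
  Measure.ofMeasurable (fun X _ => ENNReal.ofReal ((ev (E.toFun X) φ).re))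
    (by simp [E.toFun_empty, ev_zero])
    (by
      intro f hm hd
      have hs := E.sigmaAdditive f hm hd φ
      have hre : HasSum (fun i => (ev (E.toFun (f i)) φ).re)
          ((ev (E.toFun (⋃ i, f i)) φ).re) := by
        have := Complex.reCLM.hasSum hs
        simpa using this
      rw [← hre.tsum_eq, ENNReal.ofReal_tsum_of_nonneg (fun i => E.ev_re_nonneg (hm i) φ)
        hre.summable])

lemma obsMeasure_apply {X : Set Ω} (hX : MeasurableSet X) (φ : H) :
    E.obsMeasure φ X = ENNReal.ofReal ((ev (E.toFun X) φ).re) :=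
  Measure.ofMeasurable_apply X hX

instance (φ : H) : IsFiniteMeasure (E.obsMeasure φ) :=
  ⟨by rw [E.obsMeasure_apply MeasurableSet.univ]; exact ENNReal.ofReal_lt_top⟩

lemma eq_of_forall_obsMeasure {Ω' : Type*} [MeasurableSpace Ω'] (E' : Observable Ω' H)
    {X : Set Ω} {Y : Set Ω'} (hX : MeasurableSet X) (hY : MeasurableSet Y)
    (h : ∀ φ, E.obsMeasure φ X = E'.obsMeasure φ Y) : E.toFun X = E'.toFun Y := by
  apply op_eq_of_ev
  intro φ
  have h1 := h φ
  rw [E.obsMeasure_apply hX, E'.obsMeasure_apply hY] at h1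
  have h2 : (ev (E.toFun X) φ).re = (ev (E'.toFun Y) φ).re :=
    (ENNReal.ofReal_eq_ofReal_iff (E.ev_re_nonneg hX φ) (E'.ev_re_nonneg hY φ)).1 h1
  rw [← ev_re_ofReal (E.selfAdjoint hX) φ, ← ev_re_ofReal (E'.selfAdjoint hY) φ, h2]

lemma toFun_eq_zero {X : Set Ω} (hX : MeasurableSet X)
    (h : ∀ φ, E.obsMeasure φ X = 0) : E.toFun X = 0 := by
  apply op_eq_of_ev
  intro φ
  rw [ev_zero]
  have h1 := h φ
  rw [E.obsMeasure_apply hX] at h1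
  have h2 : (ev (E.toFun X) φ).re = 0 :=
    le_antisymm (by rwa [ENNReal.ofReal_eq_zero] at h1) (E.ev_re_nonneg hX φ)
  rw [← ev_re_ofReal (E.selfAdjoint hX) φ, h2, Complex.ofReal_zero]

lemma obsMeasure_eq_zero {X : Set Ω} (hX : MeasurableSet X)
    (h : E.toFun X = 0) (φ : H) : E.obsMeasure φ X = 0 := by
  rw [E.obsMeasure_apply hX, h, ev_zero]
  simp

end Observable
end Aux

namespace Observable
variable {H : Type*} [NormedAddCommGroup H] [InnerProductSpace ℂ H] [CompleteSpace H]
variable {Ω : Type*} [MeasurableSpace Ω]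

lemma isPositive_half_smul {T : H →L[ℂ] H} (hT : T.IsPositive) :
    ((1/2 : ℂ) • T).IsPositive := by
  constructor
  · rw [← ContinuousLinearMap.isSelfAdjoint_iff_isSymmetric, IsSelfAdjoint, star_smul, hT.isSelfAdjoint.star_eq]
    norm_num
  · intro x
    have h := hT.2 x
    simp only [ContinuousLinearMap.reApplyInnerSelf, ContinuousLinearMap.smul_apply,
      inner_smul_left, RCLike.re_to_complex] at h ⊢
    have hc : (starRingEnd ℂ) (1/2 : ℂ) = ((1/2 : ℝ) : ℂ) := by
      rw [one_div, map_inv₀, map_ofNat]; norm_num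
    rw [hc, Complex.re_ofReal_mul]
    exact mul_nonneg (by norm_num) h

lemma Regular.diff_eq_zero {E : Observable Ω H} (hreg : E.Regular) {A B : Set Ω}
    (hA : MeasurableSet A) (hB : MeasurableSet B) (h : opLE (E.toFun A) (E.toFun B)) :
    E.toFun (A \ B) = 0 := by
  have hC : MeasurableSet (A \ B) := hA.diff hB
  have hD : MeasurableSet (B \ A) := hB.diff hA
  have hZ : MeasurableSet (((A \ B) ∪ (B \ A))ᶜ) := (hC.union hD).compl
  have hAeq : E.toFun A = E.toFun (A ∩ B) + E.toFun (A \ B) := by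
    have h1 := E.union_diff (hA.inter hB) hA Set.inter_subset_left
    rwa [Set.diff_self_inter] at h1
  have hBeq : E.toFun B = E.toFun (A ∩ B) + E.toFun (B \ A) := by
    have h1 := E.union_diff (hA.inter hB) hB Set.inter_subset_right
    rwa [show B \ (A ∩ B) = B \ A from by rw [Set.inter_comm, Set.diff_self_inter]] at h1
  have hone : (1 : H →L[ℂ] H) =
      E.toFun (A \ B) + E.toFun (B \ A) + E.toFun (((A \ B) ∪ (B \ A))ᶜ) := by
    have h1 := E.add_of_disjoint (hC.union hD) hZ disjoint_compl_right
    rw [Set.union_compl_self, E.normalized] at h1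
    rw [h1, E.add_of_disjoint hC hD disjoint_sdiff_sdiff]
  have hkey : opLE (E.toFun (A \ B)) ((1/2 : ℂ) • 1) := by
    unfold opLE
    have he : (1/2 : ℂ) • (1 : H →L[ℂ] H) - E.toFun (A \ B) =
        (1/2 : ℂ) • ((E.toFun B - E.toFun A) + E.toFun (((A \ B) ∪ (B \ A))ᶜ)) := by
      rw [hone, hAeq, hBeq]
      module
    rw [he]
    exact isPositive_half_smul (h.add (E.pos _ hZ))
  by_cases h0 : E.toFun (A \ B) = 0
  · exact h0
  by_cases h1 : E.toFun (A \ B) = 1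
  · have hφ : ∀ φ : H, φ = 0 := by
      intro φ
      have hp := hkey
      unfold opLE at hp
      rw [h1] at hp
      have h2 := hp.2 φ
      simp only [ContinuousLinearMap.reApplyInnerSelf, ContinuousLinearMap.sub_apply,
        ContinuousLinearMap.smul_apply, ContinuousLinearMap.one_apply, inner_sub_left,
        inner_smul_left, RCLike.re_to_complex] at h2
      have hc : (starRingEnd ℂ) (1/2 : ℂ) = ((1/2 : ℝ) : ℂ) := by
        rw [one_div, map_inv₀, map_ofNat]; norm_num
      rw [hc] at h2
      have hn : @inner ℂ H _ φ φ = ((‖φ‖ : ℂ)) ^ 2 := inner_self_eq_norm_sq_to_K φ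
      rw [hn] at h2
      simp only [← Complex.ofReal_pow, ← Complex.ofReal_mul, ← Complex.ofReal_sub,
        Complex.ofReal_re] at h2
      have hno : ‖φ‖ = 0 := by nlinarith [norm_nonneg φ, sq_nonneg ‖φ‖]
      exact norm_eq_zero.1 hno
    apply op_eq_of_ev
    intro φ
    rw [hφ φ]
    simp [ev]
  · exact absurd hkey (hreg (A \ B) hC h0 h1).1

lemma Regular.obsMeasure_diff_zero {E : Observable Ω H} (hreg : E.Regular) {A B : Set Ω}
    (hA : MeasurableSet A) (hB : MeasurableSet B) (h : opLE (E.toFun A) (E.toFun B)) (φ : H) :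
    E.obsMeasure φ (A \ B) = 0 :=
  E.obsMeasure_eq_zero (hA.diff hB) (hreg.diff_eq_zero hA hB h) φ

end Observable

section Transfer
open Set
open scoped Classical
variable {H : Type*} [NormedAddCommGroup H] [InnerProductSpace ℂ H] [CompleteSpace H]
variable {Ω : Type*} [MeasurableSpace Ω] {Ω₁ : Type*} [MeasurableSpace Ω₁]

def liftFun (x₀ : Ω₁) (e : Ω₁ → ℝ) : ℝ → Ω₁ :=
  fun t => if h : ∃ x, e x = t then h.choose else x₀

lemma liftFun_comp_eq {e : Ω₁ → ℝ} (he : Function.Injective e) (x₀ : Ω₁) (x : Ω₁) :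
    liftFun x₀ e (e x) = x := by
  have h : ∃ x', e x' = e x := ⟨x, rfl⟩
  simp only [liftFun, dif_pos h]
  exact he h.choose_spec

lemma liftFun_preimage {e : Ω₁ → ℝ} (he : Function.Injective e) (x₀ : Ω₁) (X : Set Ω₁) :
    liftFun x₀ e ⁻¹' X = e '' X ∪ (if x₀ ∈ X then (Set.range e)ᶜ else ∅) := by
  classical
  ext t
  by_cases ht : t ∈ Set.range e
  · obtain ⟨x, rfl⟩ := ht
    simp only [Set.mem_preimage, liftFun_comp_eq he x₀ x, Set.mem_union,
      he.mem_set_image]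
    constructor
    · exact fun h => Or.inl h
    · rintro (h | h)
      · exact h
      · split_ifs at h with h'
        · exact absurd (Set.mem_range_self x) h
        · exact absurd h (Set.notMem_empty _)
  · have ht' : ¬ ∃ x, e x = t := by simpa [Set.mem_range] using ht
    simp only [Set.mem_preimage, liftFun, dif_neg ht', Set.mem_union]
    constructor
    · intro h
      refine Or.inr ?_
      rw [if_pos h]
      exact ht
    · rintro (h | h)
      · exact absurd (Set.image_subset_range e X h) ht
      · split_ifs at h with h'
        · exact h'
        · exact absurd h (Set.notMem_empty _)

lemma measurable_liftFun {e : Ω₁ → ℝ} (he : MeasurableEmbedding e) (x₀ : Ω₁) :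
    Measurable (liftFun x₀ e) := by
  classical
  intro X hX
  rw [liftFun_preimage he.injective]
  refine (he.measurableSet_image.2 hX).union ?_
  split_ifs
  · exact he.measurableSet_range.compl
  · exact MeasurableSet.empty

lemma exists_pullback (E : Observable Ω H) (hreg : E.Regular) (E₁ : Observable Ω₁ H)
    (hsub : E₁.ran ⊆ E.ran) {e : Ω₁ → ℝ} (he : MeasurableEmbedding e) (x₀ : Ω₁) :
    ∃ g : Ω → ℝ, Measurable g ∧
      ∀ X : Set Ω₁, MeasurableSet X →
        E₁.toFun X = E.toFun ((liftFun x₀ e ∘ g) ⁻¹' X) := by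
  classical
  have hIic : ∀ q : ℚ, MeasurableSet (e ⁻¹' Set.Iic (q : ℝ)) :=
    fun q => he.measurable measurableSet_Iic
  have hch : ∀ q : ℚ, ∃ Z, MeasurableSet Z ∧
      E₁.toFun (e ⁻¹' Set.Iic (q : ℝ)) = E.toFun Z := by
    intro q
    exact hsub ⟨e ⁻¹' Set.Iic (q : ℝ), hIic q, rfl⟩
  choose A hAm hAe using hch
  set Ati : ℚ → Set Ω := fun q => ⋃ (q' : ℚ) (_ : q' ≤ q), A q' with hAtidef
  have hAtim : ∀ q, MeasurableSet (Ati q) :=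
    fun q => MeasurableSet.iUnion fun q' => MeasurableSet.iUnion fun _ => hAm q'
  have hAtimono : ∀ {q r : ℚ}, q ≤ r → Ati q ⊆ Ati r := by
    intro q r hqr ω hω
    simp only [hAtidef, Set.mem_iUnion] at hω ⊢
    obtain ⟨q', hq', h⟩ := hω
    exact ⟨q', hq'.trans hqr, h⟩
  have hAsub : ∀ q, A q ⊆ Ati q := by
    intro q ω hω
    simp only [hAtidef, Set.mem_iUnion]
    exact ⟨q, le_refl q, hω⟩
  have hAq : ∀ (q : ℚ) (φ : H),
      E.obsMeasure φ (A q) = E₁.obsMeasure φ (e ⁻¹' Set.Iic (q : ℝ)) := by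
    intro q φ
    rw [E.obsMeasure_apply (hAm q), E₁.obsMeasure_apply (hIic q), hAe]
  have hAtiq : ∀ (q : ℚ) (φ : H), E.obsMeasure φ (Ati q) = E.obsMeasure φ (A q) := by
    intro q φ
    refine le_antisymm ?_ (measure_mono (hAsub q))
    have hdiff : E.obsMeasure φ (Ati q \ A q) = 0 := by
      have hsubU : Ati q \ A q ⊆ ⋃ (q' : ℚ) (_ : q' ≤ q), (A q' \ A q) := by
        rintro ω ⟨hin, hout⟩
        simp only [hAtidef, Set.mem_iUnion] at hin
        obtain ⟨q', hq', h⟩ := hin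
        simp only [Set.mem_iUnion]
        exact ⟨q', hq', h, hout⟩
      refine measure_mono_null hsubU
        (measure_iUnion_null fun q' => measure_iUnion_null fun hq' => ?_)
      have hop : opLE (E.toFun (A q')) (E.toFun (A q)) := by
        rw [← hAe, ← hAe]
        exact E₁.opLE_of_subset (hIic q') (hIic q)
          (Set.preimage_mono (Set.Iic_subset_Iic.2 (by exact_mod_cast hq')))
      exact hreg.obsMeasure_diff_zero (hAm q') (hAm q) hop φ
    calc E.obsMeasure φ (Ati q) ≤ E.obsMeasure φ ((Ati q \ A q) ∪ A q) :=
          measure_mono (by intro ω h; by_cases hω : ω ∈ A q <;> simp [hω, h])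
      _ ≤ E.obsMeasure φ (Ati q \ A q) + E.obsMeasure φ (A q) := measure_union_le _ _
      _ = E.obsMeasure φ (A q) := by rw [hdiff, zero_add]
  have hAtiν : ∀ (q : ℚ) (φ : H),
      E.obsMeasure φ (Ati q) = E₁.obsMeasure φ (e ⁻¹' Set.Iic (q : ℝ)) := by
    intro q φ; rw [hAtiq, hAq]
  -- the null set
  set NN : Set Ω := (⋃ n : ℕ, Ati (n : ℚ))ᶜ ∪ ⋂ q : ℚ, Ati q with hNNdef
  have hNNm : MeasurableSet NN :=
    ((MeasurableSet.iUnion fun n => hAtim _).compl).union (MeasurableSet.iInter fun q => hAtim q)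
  have huniv : ∀ φ : H, E.obsMeasure φ Set.univ = E₁.obsMeasure φ Set.univ := by
    intro φ
    rw [E.obsMeasure_apply MeasurableSet.univ, E₁.obsMeasure_apply MeasurableSet.univ,
      E.normalized, E₁.normalized]
  have hdir : ∀ φ : H, Directed (· ⊇ ·) fun q : ℚ => Ati q := by
    intro φ q r
    exact ⟨min q r, hAtimono (min_le_left q r), hAtimono (min_le_right q r)⟩
  have hNN0 : ∀ φ : H, E.obsMeasure φ NN = 0 := by
    intro φ
    rw [hNNdef]
    refine measure_union_null ?_ ?_
    · -- complement of increasing union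
      have hmono : Monotone fun n : ℕ => Ati (n : ℚ) := fun m n hmn => hAtimono (by exact_mod_cast hmn)
      have h1 : E.obsMeasure φ (⋃ n : ℕ, Ati (n : ℚ)) = ⨆ n : ℕ, E.obsMeasure φ (Ati (n : ℚ)) :=
        hmono.measure_iUnion
      have hmono2 : Monotone fun n : ℕ => e ⁻¹' Set.Iic ((n : ℚ) : ℝ) := fun m n hmn =>
        Set.preimage_mono (Set.Iic_subset_Iic.2 (by exact_mod_cast hmn))
      have h2 : E₁.obsMeasure φ (⋃ n : ℕ, e ⁻¹' Set.Iic ((n : ℚ) : ℝ)) =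
          ⨆ n : ℕ, E₁.obsMeasure φ (e ⁻¹' Set.Iic ((n : ℚ) : ℝ)) := hmono2.measure_iUnion
      have h3 : (⋃ n : ℕ, e ⁻¹' Set.Iic ((n : ℚ) : ℝ)) = Set.univ := by
        ext x
        simp only [Set.mem_iUnion, Set.mem_preimage, Set.mem_Iic, Set.mem_univ, iff_true]
        obtain ⟨n, hn⟩ := exists_nat_ge (e x)
        exact ⟨n, by exact_mod_cast hn⟩
      have h4 : E.obsMeasure φ (⋃ n : ℕ, Ati (n : ℚ)) = E.obsMeasure φ Set.univ := by
        rw [h1, huniv φ, ← h3, h2]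
        exact iSup_congr fun n => hAtiν (n : ℚ) φ
      rw [measure_compl (MeasurableSet.iUnion fun n => hAtim _) (measure_ne_top _ _), h4,
        tsub_self]
    · -- decreasing intersection
      have h1 : E.obsMeasure φ (⋂ q : ℚ, Ati q) = ⨅ q : ℚ, E.obsMeasure φ (Ati q) :=
        Directed.measure_iInter (fun q => (hAtim q).nullMeasurableSet) (hdir φ)
          ⟨0, measure_ne_top _ _⟩
      have hdir2 : Directed (· ⊇ ·) fun q : ℚ => e ⁻¹' Set.Iic ((q : ℝ)) := by
        intro q r
        exact ⟨min q r,
          Set.preimage_mono (Set.Iic_subset_Iic.2 (by exact_mod_cast min_le_left q r)),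
          Set.preimage_mono (Set.Iic_subset_Iic.2 (by exact_mod_cast min_le_right q r))⟩
      have h2 : E₁.obsMeasure φ (⋂ q : ℚ, e ⁻¹' Set.Iic ((q : ℝ))) =
          ⨅ q : ℚ, E₁.obsMeasure φ (e ⁻¹' Set.Iic ((q : ℝ))) :=
        Directed.measure_iInter (fun q => (hIic q).nullMeasurableSet) hdir2
          ⟨0, measure_ne_top _ _⟩
      have h3 : (⋂ q : ℚ, e ⁻¹' Set.Iic ((q : ℝ))) = ∅ := by
        ext x
        simp only [Set.mem_iInter, Set.mem_preimage, Set.mem_Iic, Set.mem_empty_iff_false,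
          iff_false, not_forall]
        obtain ⟨q, hq⟩ := exists_rat_lt (e x)
        exact ⟨q, by push_neg; exact hq⟩
      rw [h1]
      have : ⨅ q : ℚ, E.obsMeasure φ (Ati q) = ⨅ q : ℚ, E₁.obsMeasure φ (e ⁻¹' Set.Iic ((q : ℝ))) :=
        iInf_congr fun q => hAtiν q φ
      rw [this, ← h2, h3, measure_empty]
  -- definition of g
  set S : Ω → Set ℝ := fun ω => {x : ℝ | ∃ q : ℚ, (q : ℝ) = x ∧ ω ∈ Ati q} with hSdef
  set g : Ω → ℝ := fun ω => if ω ∈ NN then 0 else sInf (S ω) with hgdef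
  have hSbdd : ∀ ω ∉ NN, BddBelow (S ω) := by
    intro ω hω
    have hex : ∃ q₀ : ℚ, ω ∉ Ati q₀ := by
      by_contra hcon
      push_neg at hcon
      exact hω (Or.inr (Set.mem_iInter.2 hcon))
    obtain ⟨q₀, hq₀⟩ := hex
    refine ⟨(q₀ : ℝ), ?_⟩
    rintro x ⟨q, rfl, hq⟩
    by_contra hlt
    push_neg at hlt
    have hle : q ≤ q₀ := by exact_mod_cast hlt.le
    exact hq₀ (hAtimono hle hq)
  have hSne : ∀ ω ∉ NN, (S ω).Nonempty := by
    intro ω hω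
    have hmem : ω ∈ ⋃ n : ℕ, Ati (n : ℚ) := by
      by_contra hcon
      exact hω (Or.inl hcon)
    obtain ⟨n, hn⟩ := Set.mem_iUnion.1 hmem
    exact ⟨(((n : ℚ)) : ℝ), (n : ℚ), rfl, hn⟩
  have hgle : ∀ ω ∉ NN, ∀ x : ℝ, (g ω ≤ x ↔ ∀ q : ℚ, x < (q : ℝ) → ω ∈ Ati q) := by
    intro ω hω x
    rw [hgdef]
    simp only [if_neg hω]
    constructor
    · intro hle q hxq
      have hlt : sInf (S ω) < (q : ℝ) := lt_of_le_of_lt hle hxq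
      obtain ⟨y, hyS, hyq⟩ := (csInf_lt_iff (hSbdd ω hω) (hSne ω hω)).1 hlt
      obtain ⟨q', rfl, hq'⟩ := hyS
      have hle2 : q' ≤ q := by exact_mod_cast hyq.le
      exact hAtimono hle2 hq'
    · intro hall
      by_contra hlt
      push_neg at hlt
      obtain ⟨q, hxq, hqInf⟩ := exists_rat_btwn hlt
      have hmem : (q : ℝ) ∈ S ω := ⟨q, rfl, hall q hxq⟩
      exact absurd (csInf_le (hSbdd ω hω) hmem) (not_le.2 hqInf)
  have hpre : ∀ x : ℝ, g ⁻¹' Set.Iic x =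
      (if (0 : ℝ) ≤ x then NN else ∅) ∪ (NNᶜ ∩ ⋂ (q : ℚ) (_ : x < (q : ℝ)), Ati q) := by
    intro x
    ext ω
    by_cases hω : ω ∈ NN
    · by_cases h0 : (0 : ℝ) ≤ x
      · simp [hgdef, hω, h0]
      · simp [hgdef, hω, h0]
    · simp only [Set.mem_preimage, Set.mem_Iic, Set.mem_union, Set.mem_inter_iff,
        Set.mem_compl_iff, hω, not_false_eq_true, true_and]
      have hiff := hgle ω hω x
      rw [hgdef] at hiff
      simp only [if_neg hω] at hiff
      rw [hgdef]
      simp only [if_neg hω]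
      rw [hiff]
      constructor
      · intro hall
        exact Or.inr (Set.mem_iInter.2 fun q => Set.mem_iInter.2 fun hq => hall q hq)
      · rintro (hmem | hmem)
        · split_ifs at hmem
          · exact absurd hmem hω
          · exact absurd hmem (Set.notMem_empty ω)
        · intro q hq
          exact Set.mem_iInter.1 (Set.mem_iInter.1 hmem q) hq
  have hgm : Measurable g := by
    apply measurable_of_Iic
    intro x
    rw [hpre x]
    refine MeasurableSet.union ?_ (hNNm.compl.inter
      (MeasurableSet.iInter fun q => MeasurableSet.iInter fun _ => hAtim q))
    split_ifs
    · exact hNNm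
    · exact MeasurableSet.empty
  have hmeaspre : ∀ (x : ℝ) (φ : H),
      E.obsMeasure φ (g ⁻¹' Set.Iic x) = E₁.obsMeasure φ (e ⁻¹' Set.Iic x) := by
    intro x φ
    set I : Set Ω := ⋂ (q : ℚ) (_ : x < (q : ℝ)), Ati q with hIdef
    have hIm : MeasurableSet I :=
      MeasurableSet.iInter fun q => MeasurableSet.iInter fun _ => hAtim q
    have h1 : E.obsMeasure φ (g ⁻¹' Set.Iic x) = E.obsMeasure φ I := by
      rw [hpre x]
      refine le_antisymm ?_ ?_
      · calc E.obsMeasure φ ((if (0 : ℝ) ≤ x then NN else ∅) ∪ (NNᶜ ∩ I))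
            ≤ E.obsMeasure φ (if (0 : ℝ) ≤ x then NN else ∅) + E.obsMeasure φ (NNᶜ ∩ I) :=
              measure_union_le _ _
          _ ≤ 0 + E.obsMeasure φ I := by
              refine add_le_add ?_ (measure_mono Set.inter_subset_right)
              split_ifs
              · exact le_of_eq (hNN0 φ)
              · simp
          _ = E.obsMeasure φ I := zero_add _
      · calc E.obsMeasure φ I ≤ E.obsMeasure φ ((NNᶜ ∩ I) ∪ NN) :=
              measure_mono (fun ω hω => by
                by_cases h : ω ∈ NN
                · exact Or.inr h
                · exact Or.inl ⟨h, hω⟩)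
          _ ≤ E.obsMeasure φ (NNᶜ ∩ I) + E.obsMeasure φ NN := measure_union_le _ _
          _ = E.obsMeasure φ (NNᶜ ∩ I) := by rw [hNN0 φ, add_zero]
          _ ≤ _ := measure_mono Set.subset_union_right
    haveI hne : Nonempty {q : ℚ // x < (q : ℝ)} := by
      obtain ⟨q, hq⟩ := exists_rat_gt x
      exact ⟨⟨q, hq⟩⟩
    have hIeq : I = ⋂ q : {q : ℚ // x < (q : ℝ)}, Ati q.1 := by
      rw [hIdef]
      ext ω
      constructor
      · intro h
        exact Set.mem_iInter.2 fun q => Set.mem_iInter.1 (Set.mem_iInter.1 h q.1) q.2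
      · intro h
        exact Set.mem_iInter.2 fun q => Set.mem_iInter.2 fun hq => Set.mem_iInter.1 h ⟨q, hq⟩
    have h2 : E.obsMeasure φ I = ⨅ q : {q : ℚ // x < (q : ℝ)}, E.obsMeasure φ (Ati q.1) := by
      rw [hIeq]
      exact Directed.measure_iInter (fun q => (hAtim q.1).nullMeasurableSet)
        (fun a b => ⟨⟨min a.1 b.1, by push_cast; exact lt_min a.2 b.2⟩,
          hAtimono (min_le_left _ _), hAtimono (min_le_right _ _)⟩)
        ⟨hne.some, measure_ne_top _ _⟩
    have hIic2 : e ⁻¹' Set.Iic x = ⋂ q : {q : ℚ // x < (q : ℝ)}, e ⁻¹' Set.Iic ((q.1 : ℝ)) := by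
      ext y
      simp only [Set.mem_preimage, Set.mem_iInter, Set.mem_Iic]
      constructor
      · intro hy q
        exact hy.trans q.2.le
      · intro hall
        by_contra hlt
        push_neg at hlt
        obtain ⟨q, hxq, hqy⟩ := exists_rat_btwn hlt
        exact absurd (hall ⟨q, hxq⟩) (not_le.2 hqy)
    have h3 : E₁.obsMeasure φ (e ⁻¹' Set.Iic x) =
        ⨅ q : {q : ℚ // x < (q : ℝ)}, E₁.obsMeasure φ (e ⁻¹' Set.Iic ((q.1 : ℝ))) := by
      rw [hIic2]
      exact Directed.measure_iInter (fun q => (hIic q.1).nullMeasurableSet)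
        (fun a b => ⟨⟨min a.1 b.1, by push_cast; exact lt_min a.2 b.2⟩,
          Set.preimage_mono (Set.Iic_subset_Iic.2 (by exact_mod_cast min_le_left a.1 b.1)),
          Set.preimage_mono (Set.Iic_subset_Iic.2 (by exact_mod_cast min_le_right a.1 b.1))⟩)
        ⟨hne.some, measure_ne_top _ _⟩
    rw [h1, h2, h3]
    exact iInf_congr fun q => hAtiν q.1 φ
  have hmap : ∀ φ : H, Measure.map g (E.obsMeasure φ) = Measure.map e (E₁.obsMeasure φ) := by
    intro φ
    haveI : IsFiniteMeasure (Measure.map g (E.obsMeasure φ)) :=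
      ⟨by rw [Measure.map_apply hgm MeasurableSet.univ]; exact measure_lt_top _ _⟩
    refine ext_of_generate_finite (Set.range Set.Iic) ?_ isPiSystem_Iic ?_ ?_
    · rw [BorelSpace.measurable_eq (α := ℝ)]
      exact borel_eq_generateFrom_Iic ℝ
    · rintro s ⟨x, rfl⟩
      rw [Measure.map_apply hgm measurableSet_Iic,
        Measure.map_apply he.measurable measurableSet_Iic]
      exact hmeaspre x φ
    · rw [Measure.map_apply hgm MeasurableSet.univ,
        Measure.map_apply he.measurable MeasurableSet.univ]
      simp only [Set.preimage_univ]
      exact huniv φ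
  refine ⟨g, hgm, ?_⟩
  intro X hX
  have hlm : Measurable (liftFun x₀ e) := measurable_liftFun he x₀
  have hWm : MeasurableSet ((liftFun x₀ e ∘ g) ⁻¹' X) := (hlm.comp hgm) hX
  refine (E.eq_of_forall_obsMeasure E₁ hWm hX ?_).symm
  intro φ
  have hBm : MeasurableSet (liftFun x₀ e ⁻¹' X) := hlm hX
  have h1 : (liftFun x₀ e ∘ g) ⁻¹' X = g ⁻¹' (liftFun x₀ e ⁻¹' X) := rfl
  rw [h1, ← Measure.map_apply hgm hBm, hmap φ, Measure.map_apply he.measurable hBm]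
  congr 1
  ext y
  simp only [Set.mem_preimage, liftFun_comp_eq he.injective x₀ y]


end Transfer

/-- If there is a regular observable `E` with
`ran(E₁) ∪ ran(E₂) ⊆ ran(E)`, then `E₁` and `E₂` are functionally coexistent; indeed the
map `(X,Y) ↦ E₁(X) ∧_{ran(E)} E₂(Y)` (meet in the Boolean algebra `ran(E)`) is a
biobservable for `E₁` and `E₂`. -/
theorem regularly_coexistent_functionallyCoexistent
    {Ω₁ : Type*} [TopologicalSpace Ω₁] [LocallyCompactSpace Ω₁]
    [TopologicalSpace.MetrizableSpace Ω₁] [TopologicalSpace.SeparableSpace Ω₁]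
    [MeasurableSpace Ω₁] [BorelSpace Ω₁]
    {Ω₂ : Type*} [TopologicalSpace Ω₂] [LocallyCompactSpace Ω₂]
    [TopologicalSpace.MetrizableSpace Ω₂] [TopologicalSpace.SeparableSpace Ω₂]
    [MeasurableSpace Ω₂] [BorelSpace Ω₂]
    {Ω : Type*} [TopologicalSpace Ω] [LocallyCompactSpace Ω]
    [TopologicalSpace.MetrizableSpace Ω] [TopologicalSpace.SeparableSpace Ω]
    [MeasurableSpace Ω] [BorelSpace Ω]
    (E₁ : Observable Ω₁ H) (E₂ : Observable Ω₂ H) (E : Observable Ω H)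
    (hreg : E.Regular) (hsub : E₁.ran ∪ E₂.ran ⊆ E.ran) :
    FunctionallyCoexistent E₁ E₂ ∧
    ∃ B : Set Ω₁ → Set Ω₂ → (H →L[ℂ] H),
      IsBiobservable B E₁ E₂ ∧
      ∀ (X : Set Ω₁) (Y : Set Ω₂), MeasurableSet X → MeasurableSet Y →
        B X Y ∈ E.ran ∧
        opLE (B X Y) (E₁.toFun X) ∧ opLE (B X Y) (E₂.toFun Y) ∧
        (∀ C ∈ E.ran, opLE C (E₁.toFun X) → opLE C (E₂.toFun Y) → opLE C (B X Y)) := by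
  classical
  by_cases htriv : ∀ φ : H, φ = 0
  · haveI hsub' : Subsingleton H := ⟨fun a b => by rw [htriv a, htriv b]⟩
    have hop0 : ∀ T S : H →L[ℂ] H, T = S := fun T S => by
      ext x; exact Subsingleton.elim _ _
    have hpos : ∀ T : H →L[ℂ] H, T.IsPositive := fun T => by
      rw [hop0 T 0]; exact ContinuousLinearMap.isPositive_zero
    have hevz : ∀ (T : H →L[ℂ] H) (φ : H), ev T φ = 0 := fun T φ => by
      rw [htriv φ]; simp [ev]
    have hOLE : ∀ A B : H →L[ℂ] H, opLE A B := fun A B => hpos _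
    constructor
    · refine ⟨Empty, ⊤, ⟨fun _ => 1, fun _ _ => hpos _, rfl, fun f _ _ φ => ?_⟩,
        fun x => x.elim, fun x => x.elim, fun _ _ => trivial, fun _ _ => trivial,
        fun X _ => hop0 _ _, fun Y _ => hop0 _ _⟩
      simp only [hevz]
      exact hasSum_zero
    · refine ⟨fun _ _ => E.toFun Set.univ, ⟨⟨fun _ _ _ _ => hpos _, ?_, ?_⟩,
        by rw [E.normalized], fun X _ => hop0 _ _, fun Y _ => hop0 _ _⟩, ?_⟩
      · intro Y _ f _ _ φ
        simp only [hevz]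
        exact hasSum_zero
      · intro X _ f _ _ φ
        simp only [hevz]
        exact hasSum_zero
      · intro X Y _ _
        exact ⟨⟨Set.univ, MeasurableSet.univ, rfl⟩, hOLE _ _, hOLE _ _,
          fun C _ _ _ => hOLE _ _⟩
  · push_neg at htriv
    obtain ⟨φ₀, hφ₀⟩ := htriv
    haveI : PolishSpace Ω₁ := myPolishSpace Ω₁
    haveI : PolishSpace Ω₂ := myPolishSpace Ω₂
    have hne₁ : Nonempty Ω₁ := by
      by_contra hcon
      rw [not_nonempty_iff] at hcon
      have h1 : (Set.univ : Set Ω₁) = ∅ := Set.univ_eq_empty_iff.2 hcon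
      have h2 := E₁.normalized
      rw [h1, E₁.toFun_empty] at h2
      apply hφ₀
      have h3 := congrArg (fun T : H →L[ℂ] H => T φ₀) h2
      simpa using h3.symm
    have hne₂ : Nonempty Ω₂ := by
      by_contra hcon
      rw [not_nonempty_iff] at hcon
      have h1 : (Set.univ : Set Ω₂) = ∅ := Set.univ_eq_empty_iff.2 hcon
      have h2 := E₂.normalized
      rw [h1, E₂.toFun_empty] at h2
      apply hφ₀
      have h3 := congrArg (fun T : H →L[ℂ] H => T φ₀) h2
      simpa using h3.symm
    obtain ⟨x₁⟩ := hne₁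
    obtain ⟨x₂⟩ := hne₂
    obtain ⟨e₁, he₁⟩ := MeasureTheory.exists_measurableEmbedding_real Ω₁
    obtain ⟨e₂, he₂⟩ := MeasureTheory.exists_measurableEmbedding_real Ω₂
    have hsub₁ : E₁.ran ⊆ E.ran := fun x hx => hsub (Or.inl hx)
    have hsub₂ : E₂.ran ⊆ E.ran := fun x hx => hsub (Or.inr hx)
    obtain ⟨g₁, hg₁, hf₁⟩ := exists_pullback E hreg E₁ hsub₁ he₁ x₁
    obtain ⟨g₂, hg₂, hf₂⟩ := exists_pullback E hreg E₂ hsub₂ he₂ x₂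
    set f₁ : Ω → Ω₁ := liftFun x₁ e₁ ∘ g₁ with hf₁def
    set f₂ : Ω → Ω₂ := liftFun x₂ e₂ ∘ g₂ with hf₂def
    have hf₁m : Measurable f₁ := (measurable_liftFun he₁ x₁).comp hg₁
    have hf₂m : Measurable f₂ := (measurable_liftFun he₂ x₂).comp hg₂
    constructor
    · -- functional coexistence via a pushforward observable on ℝ × ℝ
      set G : Ω → ℝ × ℝ := fun ω => (g₁ ω, g₂ ω) with hGdef
      have hGm : Measurable G := hg₁.prodMk hg₂
      refine ⟨ℝ × ℝ, inferInstance,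
        ⟨fun Z => E.toFun (G ⁻¹' Z), fun Z hZ => E.pos _ (hGm hZ),
          by show E.toFun (G ⁻¹' Set.univ) = 1; rw [Set.preimage_univ, E.normalized], ?_⟩,
        fun p => liftFun x₁ e₁ p.1, fun p => liftFun x₂ e₂ p.2,
        (measurable_liftFun he₁ x₁).comp measurable_fst,
        (measurable_liftFun he₂ x₂).comp measurable_snd, ?_, ?_⟩
      · intro f hm hd φ
        have h := E.sigmaAdditive (fun i => G ⁻¹' f i) (fun i => hGm (hm i))
          (fun i j hij => Disjoint.preimage G (hd hij)) φ
        simpa [Set.preimage_iUnion] using h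
      · intro X hX
        rw [hf₁ X hX]
        rfl
      · intro Y hY
        rw [hf₂ Y hY]
        rfl
    · refine ⟨fun X Y => E.toFun (f₁ ⁻¹' X ∩ f₂ ⁻¹' Y),
        ⟨⟨fun X Y hX hY => E.pos _ ((hf₁m hX).inter (hf₂m hY)), ?_, ?_⟩, ?_, ?_, ?_⟩, ?_⟩
      · intro Y hY f hm hd φ
        have h := E.sigmaAdditive (fun i => f₁ ⁻¹' f i ∩ f₂ ⁻¹' Y)
          (fun i => (hf₁m (hm i)).inter (hf₂m hY))
          (fun i j hij =>
            ((hd hij).preimage f₁).mono Set.inter_subset_left Set.inter_subset_left) φ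
        simpa [Set.preimage_iUnion, Set.iUnion_inter] using h
      · intro X hX f hm hd φ
        have h := E.sigmaAdditive (fun i => f₁ ⁻¹' X ∩ f₂ ⁻¹' f i)
          (fun i => (hf₁m hX).inter (hf₂m (hm i)))
          (fun i j hij =>
            ((hd hij).preimage f₂).mono Set.inter_subset_right Set.inter_subset_right) φ
        simpa [Set.preimage_iUnion, Set.inter_iUnion] using h
      · show E.toFun (f₁ ⁻¹' Set.univ ∩ f₂ ⁻¹' Set.univ) = 1
        rw [Set.preimage_univ, Set.preimage_univ, Set.univ_inter, E.normalized]
      · intro X hX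
        show E.toFun (f₁ ⁻¹' X ∩ f₂ ⁻¹' Set.univ) = E₁.toFun X
        rw [Set.preimage_univ, Set.inter_univ]
        exact (hf₁ X hX).symm
      · intro Y hY
        show E.toFun (f₁ ⁻¹' Set.univ ∩ f₂ ⁻¹' Y) = E₂.toFun Y
        rw [Set.preimage_univ, Set.univ_inter]
        exact (hf₂ Y hY).symm
      · intro X Y hX hY
        have hV : MeasurableSet (f₁ ⁻¹' X ∩ f₂ ⁻¹' Y) := (hf₁m hX).inter (hf₂m hY)
        refine ⟨⟨_, hV, rfl⟩, ?_, ?_, ?_⟩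
        · rw [hf₁ X hX]
          exact E.opLE_of_subset hV (hf₁m hX) Set.inter_subset_left
        · rw [hf₂ Y hY]
          exact E.opLE_of_subset hV (hf₂m hY) Set.inter_subset_right
        · rintro C ⟨Z, hZ, rfl⟩ hC1 hC2
          rw [hf₁ X hX] at hC1
          rw [hf₂ Y hY] at hC2
          have h01 : E.toFun (Z \ f₁ ⁻¹' X) = 0 := hreg.diff_eq_zero hZ (hf₁m hX) hC1
          have h02 : E.toFun (Z \ f₂ ⁻¹' Y) = 0 := hreg.diff_eq_zero hZ (hf₂m hY) hC2
          have hdm : MeasurableSet (Z \ (f₁ ⁻¹' X ∩ f₂ ⁻¹' Y)) := hZ.diff hV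
          have h0 : E.toFun (Z \ (f₁ ⁻¹' X ∩ f₂ ⁻¹' Y)) = 0 := by
            apply E.toFun_eq_zero hdm
            intro φ
            refine measure_mono_null ?_ (measure_union_null
              (E.obsMeasure_eq_zero (hZ.diff (hf₁m hX)) h01 φ)
              (E.obsMeasure_eq_zero (hZ.diff (hf₂m hY)) h02 φ))
            rintro ω ⟨hωZ, hωn⟩
            by_cases h : ω ∈ f₁ ⁻¹' X
            · exact Or.inr ⟨hωZ, fun hc => hωn ⟨h, hc⟩⟩
            · exact Or.inl ⟨hωZ, h⟩
          have hsplit := E.union_diff (hZ.inter hV) hZ Set.inter_subset_left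
          rw [Set.diff_self_inter, h0, add_zero] at hsplit
          unfold opLE
          rw [hsplit]
          exact E.opLE_of_subset (hZ.inter hV) hV Set.inter_subset_right


end
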